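/- arXiv:1406.7571 — 4 statements merged into one kernel-verified Lean document; each statement's English description precedes it below -/
import Mathlib

section
/- The anticontinuant satisfies the recursion: [q_i, ..., q_j]* = (q_i − q_j)·[q_{i+1}, ..., q_{j-1}] − [q_{i+1}, ..., q_{j-1}]* for i < j, with [ ]* = 0 and [q]* = 0 for a single entry, where [·] is the continuant. -/
/-- The continuant of a finite sequence of integers. -/
def cont : List ℤ → ℤ
  | [] => 1
  | [a] => a
  | a :: b :: l => a * cont (b :: l) + cont l


/-- The anticontinuant `[q₀,…,q_{s-1}]* = [q₀,…,q_{s-2}] − [q₁,…,q_{s-1}]`. -/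
def anticont (l : List ℤ) : ℤ := cont l.dropLast - cont l.tail

/-! `cont` recurses at the front of the list, but continuants also satisfy the recursion at the
back (`cont_concat`). Peeling both ends of `a :: (m ++ [b])` and subtracting leaves
`(a - b) * cont m` plus the two continuants of length `|m| - 1`, whose difference is `anticont m`. -/

theorem cont_cons (a : ℤ) {m : List ℤ} (hm : m ≠ []) :
    cont (a :: m) = a * cont m + cont m.tail := by
  obtain ⟨x, l, rfl⟩ := List.exists_cons_of_ne_nil hm
  rfl

theorem cont_append_pair :
    ∀ (l : List ℤ) (a b : ℤ), cont (l ++ [a, b]) = b * cont (l ++ [a]) + cont l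
  | [], a, b => by simp only [List.nil_append, cont]; ring
  | [x], a, b => by simp only [List.cons_append, List.nil_append, cont]; ring
  | x :: y :: t, a, b => by
    simp only [List.cons_append, cont]
    rw [← List.cons_append, cont_append_pair (y :: t), cont_append_pair t, List.cons_append]
    ring

theorem cont_concat {m : List ℤ} (b : ℤ) (hm : m ≠ []) :
    cont (m ++ [b]) = b * cont m + cont m.dropLast := by
  obtain ⟨l, x, rfl⟩ := List.eq_nil_or_concat m |>.resolve_left hm
  rw [List.concat_eq_append, List.append_assoc, List.singleton_append, cont_append_pair,
    List.dropLast_concat]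

/-- The recursion for anticontinuants: `[]* = 0`, `[q]* = 0`, and
`[q_i,…,q_j]* = (q_i − q_j)·[q_{i+1},…,q_{j-1}] − [q_{i+1},…,q_{j-1}]*` for `i < j`. -/
theorem anticont_recursion :
    anticont ([] : List ℤ) = 0 ∧ (∀ q : ℤ, anticont [q] = 0) ∧
      ∀ (a b : ℤ) (m : List ℤ),
        anticont (a :: (m ++ [b])) = (a - b) * cont m - anticont m := by
  refine ⟨rfl, fun q => sub_self _, fun a b m => ?_⟩
  rcases eq_or_ne m [] with rfl | hm
  · simp [anticont, cont]
  have hdrop : (a :: (m ++ [b])).dropLast = a :: m := by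
    rw [← List.cons_append, List.dropLast_concat]
  rw [anticont, hdrop, List.tail_cons, cont_cons a hm, cont_concat b hm, anticont]
  ring
end

section
/- If a sequence of positive integers has the form q_0, ..., q_{s-1}, x_0, ..., x_{λ-1}, q_{s-1}, ..., q_0 (a symmetric outer part around an arbitrary middle block x), then its anticontinuant equals (−1)^s times the anticontinuant of the middle block: [q_0, ..., q_{s-1}, x, q_{s-1}, ..., q_0]* = (−1)^s · [x]*. In particular, the anticontinuant of any symmetric sequence is 0. -/
theorem cont_cons_s6 (a : ℤ) :
    ∀ {l : List ℤ}, l ≠ [] → cont (a :: l) = a * cont l + cont l.tail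
  | _ :: _, _ => rfl

theorem cont_append_singleton (a : ℤ) :
    ∀ {l : List ℤ}, l ≠ [] → cont (l ++ [a]) = a * cont l + cont l.dropLast
  | [x], _ => by simp only [List.singleton_append, cont, List.dropLast_singleton]; ring
  | [x, y], _ => by
      simp only [List.cons_append, List.nil_append, cont, List.dropLast_cons_cons,
        List.dropLast_singleton]
      ring
  | x :: y :: z :: l, _ => by
      have h₁ := cont_append_singleton a (l := y :: z :: l) (List.cons_ne_nil _ _)
      have h₂ := cont_append_singleton a (l := z :: l) (List.cons_ne_nil _ _)
      simp only [List.cons_append, List.dropLast_cons_cons] at h₁ h₂ ⊢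
      rw [cont.eq_3, h₁, h₂]
      simp only [cont.eq_3]
      ring

theorem cont_reverse : ∀ l : List ℤ, cont l.reverse = cont l
  | [] => rfl
  | [_] => rfl
  | x :: y :: l => by
      rw [List.reverse_cons, cont_append_singleton x (by simp), List.dropLast_reverse,
        List.tail_cons, cont_reverse, cont_reverse, cont.eq_3]

theorem anticont_cons_append_singleton (q : ℤ) (l : List ℤ) :
    anticont (q :: l ++ [q]) = -anticont l := by
  rcases eq_or_ne l [] with rfl | hl
  · simp [anticont]
  · rw [anticont, List.dropLast_concat, List.cons_append, List.tail_cons, cont_cons_s6 q hl,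
      cont_append_singleton q hl, anticont]
    ring

theorem anticont_eq_zero_of_reverse_eq {l : List ℤ} (h : l.reverse = l) : anticont l = 0 := by
  rw [anticont, ← List.reverse_reverse l.tail, ← List.dropLast_reverse, h, cont_reverse,
    sub_self]

theorem anticont_append_append_reverse (w x : List ℤ) :
    anticont (w ++ x ++ w.reverse) = (-1) ^ w.length * anticont x := by
  induction w with
  | nil => simp
  | cons q w ih =>
    rw [show q :: w ++ x ++ (q :: w).reverse = q :: (w ++ x ++ w.reverse) ++ [q] by simp,
      anticont_cons_append_singleton, ih, List.length_cons, pow_succ]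
    ring

/-- For a symmetric outer part around a middle block:
`[q₀,…,q_{s-1}, x, q_{s-1},…,q₀]* = (−1)^s · [x]*`; in particular the anticontinuant of
any symmetric sequence is `0`. -/
theorem anticont_symmetric_outer :
    (∀ w x : List ℤ, (∀ q ∈ w, 0 < q) → (∀ q ∈ x, 0 < q) →
      anticont (w ++ x ++ w.reverse) = (-1) ^ w.length * anticont x) ∧
    ∀ l : List ℤ, (∀ q ∈ l, 0 < q) → l.reverse = l → anticont l = 0 :=
  ⟨fun w x _ _ => anticont_append_append_reverse w x,
    fun _ _ h => anticont_eq_zero_of_reverse_eq h⟩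
end

section
/- If a finite sequence of positive integers is not symmetric (not equal to its reversal), then its anticontinuant is nonzero. -/
/-!
Peel off both ends: `anticont (a :: (m ++ [c])) = (a - c) * cont m - anticont m`.
If `a = c` the inner sequence `m` is still asymmetric and induction applies. If `a ≠ c` then
`|(a - c) * cont m| ≥ cont m`, while for positive entries both continuants in `anticont m`
lie in `(0, cont m]`, so `|anticont m| < cont m`.
-/

theorem cont_cons_append_singleton : ∀ (a : ℤ) (l : List ℤ) (c : ℤ),
    cont (a :: (l ++ [c])) = c * cont (a :: l) + cont (a :: l).dropLast
  | a, [], c => by simp only [cont, List.nil_append, List.dropLast_singleton]; ring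
  | a, [b], c => by
    simp only [cont, List.singleton_append, List.dropLast_cons_cons, List.dropLast_singleton]
    ring
  | a, b :: d :: l, c => by
    have hb := cont_cons_append_singleton b (d :: l) c
    have hd := cont_cons_append_singleton d l c
    simp only [List.cons_append, List.dropLast_cons_cons] at hb hd ⊢
    rw [cont.eq_3, hb, hd, cont.eq_3 a b (d :: l), cont.eq_3 a b]
    ring

theorem cont_pos : ∀ l : List ℤ, (∀ q ∈ l, 0 < q) → 0 < cont l
  | [], _ => zero_lt_one
  | [a], hl => hl a (List.mem_singleton_self a)
  | a :: b :: l, hl => by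
    have ha := hl a List.mem_cons_self
    have hbl := cont_pos (b :: l) fun q hq => hl q (List.mem_cons_of_mem a hq)
    have hl' := cont_pos l fun q hq => hl q (by simp [hq])
    simp only [cont]
    positivity

theorem cont_le_cont_cons {a : ℤ} {l : List ℤ} (ha : 0 < a) (hl : ∀ q ∈ l, 0 < q) :
    cont l ≤ cont (a :: l) := by
  match l with
  | [] => simp only [cont]; omega
  | b :: t =>
    have hbt := cont_pos (b :: t) hl
    have ht := cont_pos t fun q hq => hl q (List.mem_cons_of_mem b hq)
    simp only [cont]
    nlinarith

theorem cont_le_cont_append_singleton {l : List ℤ} {c : ℤ} (hc : 0 < c) (hl : ∀ q ∈ l, 0 < q) :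
    cont l ≤ cont (l ++ [c]) := by
  match l with
  | [] => simp only [cont, List.nil_append]; omega
  | a :: m =>
    have ham := cont_pos (a :: m) hl
    have hdrop := cont_pos (a :: m).dropLast fun q hq => hl q (List.dropLast_subset _ hq)
    rw [List.cons_append, cont_cons_append_singleton]
    nlinarith

theorem anticont_cons_append_singleton_s7 (a : ℤ) (m : List ℤ) (c : ℤ) :
    anticont (a :: (m ++ [c])) = cont (a :: m) - cont (m ++ [c]) := by
  rw [anticont, ← List.cons_append, List.dropLast_concat, List.cons_append, List.tail_cons]

theorem anticont_cons_append_singleton_eq_sub (a : ℤ) (m : List ℤ) (c : ℤ) :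
    anticont (a :: (m ++ [c])) = (a - c) * cont m - anticont m := by
  rw [anticont_cons_append_singleton_s7]
  match m with
  | [] => simp [anticont, cont]
  | d :: m' =>
    rw [List.cons_append, cont_cons_append_singleton]
    simp only [cont, anticont, List.tail_cons]
    ring

theorem abs_anticont_lt_cont {l : List ℤ} (hl : ∀ q ∈ l, 0 < q) : |anticont l| < cont l := by
  induction l using List.bidirectionalRec with
  | nil => simp [anticont, cont]
  | singleton a => simpa [anticont, cont] using hl a (List.mem_singleton_self a)
  | cons_append a m c _ =>
    have ham : ∀ q ∈ a :: m, 0 < q := fun q hq => hl q (by simp at hq ⊢; tauto)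
    have hmc : ∀ q ∈ m ++ [c], 0 < q := fun q hq => hl q (List.mem_cons_of_mem a hq)
    have h₁ := cont_le_cont_append_singleton (hl c (by simp)) ham
    have h₂ := cont_le_cont_cons (hl a List.mem_cons_self) hmc
    have h₃ := cont_pos (a :: m) ham
    have h₄ := cont_pos (m ++ [c]) hmc
    rw [List.cons_append] at h₁
    rw [anticont_cons_append_singleton_s7, abs_lt]
    constructor <;> linarith

theorem anticont_cons_append_singleton_ne_zero {a c : ℤ} {m : List ℤ} (hac : a ≠ c)
    (hm : ∀ q ∈ m, 0 < q) : anticont (a :: (m ++ [c])) ≠ 0 := by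
  rw [anticont_cons_append_singleton_eq_sub, sub_ne_zero]
  intro h
  have hlt := abs_anticont_lt_cont hm
  rw [← h, abs_mul, abs_of_pos (cont_pos m hm)] at hlt
  have : 1 ≤ |a - c| := Int.one_le_abs (sub_ne_zero.mpr hac)
  nlinarith [cont_pos m hm]

/-- An asymmetric sequence of positive integers has nonzero anticontinuant. -/
theorem anticont_ne_zero_of_not_symm (l : List ℤ) (hl : ∀ q ∈ l, 0 < q)
    (h : l.reverse ≠ l) : anticont l ≠ 0 := by
  induction l using List.bidirectionalRec with
  | nil => exact absurd rfl h
  | singleton a => exact absurd rfl h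
  | cons_append a m c ih =>
    have hm : ∀ q ∈ m, 0 < q := fun q hq => hl q (by simp [hq])
    by_cases hac : a = c
    · subst hac
      rw [anticont_cons_append_singleton_eq_sub, sub_self, zero_mul, zero_sub, neg_ne_zero]
      exact ih hm fun hrev => h (by simp [hrev])
    · exact anticont_cons_append_singleton_ne_zero hac hm
end

section
/- Suppose α > β > 0 are relatively prime integers and the simple continued fraction expansion of α/β has quotient sequence q = (q_0, ..., q_{s-1}). Then β² + [q]*·β + (−1)^s ≡ 0 (mod α), where [q]* is the anticontinuant of q. -/
/-! Since `β² + [q]*·β = [q₀,…,q_{s-2}]·β`, the congruence is the determinant identity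
`[q]·[q₁,…,q_{s-2}] − [q₀,…,q_{s-2}]·[q₁,…,q_{s-1}] = (−1)^s` for continuants, read modulo `α = [q]`. -/

theorem cont_cons_cons (a b : ℤ) (l : List ℤ) :
    cont (a :: b :: l) = a * cont (b :: l) + cont l := rfl

theorem cont_mul_cont_tail_dropLast (a b : ℤ) (m : List ℤ) :
    cont (a :: b :: m) * cont (b :: m).dropLast
      = cont (a :: b :: m).dropLast * cont (b :: m) + (-1) ^ m.length := by
  induction m generalizing a b with
  | nil => simp [cont]
  | cons c m ih =>
    have ih' := ih b c
    simp only [List.dropLast_cons_cons, cont_cons_cons, List.length_cons, pow_succ] at ih' ⊢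
    linear_combination -ih'

theorem cont_dvd_cont_dropLast_mul_cont_tail_add_neg_one_pow (l : List ℤ) :
    cont l ∣ cont l.dropLast * cont l.tail + (-1) ^ l.length := by
  match l with
  | [] => simp [cont]
  | [a] => simp [cont]
  | a :: b :: m =>
    refine ⟨cont (b :: m).dropLast, ?_⟩
    rw [cont_mul_cont_tail_dropLast]
    simp [pow_succ]

theorem root_of_quadratic_congruence_general (α β : ℤ) (l : List ℤ)
    (hα : cont l = α) (hβl : cont l.tail = β) :
    α ∣ β ^ 2 + anticont l * β + (-1) ^ l.length := by
  have key := cont_dvd_cont_dropLast_mul_cont_tail_add_neg_one_pow l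
  rw [hα, hβl] at key
  convert key using 1
  rw [anticont, hβl]
  ring

/-- If α/β in lowest terms has continued fraction expansion with quotient sequence `l`,
then `β² + [l]*·β + (−1)^s ≡ 0 (mod α)` where `s` is the length of `l`. -/
theorem root_of_quadratic_congruence (α β : ℤ) (hβ : 0 < β) (hαβ : β < α)
    (hcop : IsCoprime α β) (l : List ℤ) (hpos : ∀ q ∈ l, 0 < q)
    (hα : cont l = α) (hβl : cont l.tail = β) :
    α ∣ β ^ 2 + anticont l * β + (-1) ^ l.length :=
  root_of_quadratic_congruence_general α β l hα hβl
end
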